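/- Assume the minus-infinity-order Rényi entropy rate ℋ₋∞ exists with 0 < ℋ₋∞ < ∞, and that β·ℋ₋∞ > 1. For n large enough define the minimal detectable overlap t_MDO(n) := max{ t ∈ {1,…,ℓ(n)} : max_{x∈𝒳^t : P_{X₁^t}(x)>0} log(1/P_{X₁^t}(x)) ≤ log n_ℓ } (the set is nonempty for all sufficiently large n). Then t_MDO(n) → ∞ and t_MDO(n)/log n → 1/ℋ₋∞ as n → ∞. -/

import Mathlib

open MeasureTheory Filter Real

section

variable {𝒳 : Type*} [Fintype 𝒳] [MeasurableSpace 𝒳] [MeasurableSingletonClass 𝒳]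

/-- The left shift on two-sided sequences. -/
def shift {𝒳 : Type*} : (ℤ → 𝒳) → (ℤ → 𝒳) := fun ω i => ω (i + 1)

/-- The pmf of the block `(X_a, …, X_{a+t-1})` under `μ`. -/
noncomputable def blockPmf (μ : Measure (ℤ → 𝒳)) (a : ℤ) (t : ℕ) (x : Fin t → 𝒳) : ℝ :=
  (μ {ω | ∀ i : Fin t, ω (a + ((i : ℕ) : ℤ)) = x i}).toReal

/-- Shannon entropy of the block `(X_1, …, X_t)`. -/
noncomputable def shannonH (μ : Measure (ℤ → 𝒳)) (t : ℕ) : ℝ :=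
  ∑ x : Fin t → 𝒳, Real.negMulLog (blockPmf μ 1 t x)

/-- Order-`α` Rényi entropy of the block `(X_1, …, X_t)`. -/
noncomputable def renyiH (μ : Measure (ℤ → 𝒳)) (α : ℝ) (t : ℕ) : ℝ :=
  (1 - α)⁻¹ * Real.log (∑ x : Fin t → 𝒳, blockPmf μ 1 t x ^ α)

/-- `max_{x : P(x) > 0} log (1 / P_{X_1^t}(x))`. -/
noncomputable def maxInfo (μ : Measure (ℤ → 𝒳)) (t : ℕ) : ℝ :=
  sSup {r : ℝ | ∃ x : Fin t → 𝒳, 0 < blockPmf μ 1 t x ∧ r = Real.log (1 / blockPmf μ 1 t x)}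

/-- The σ-algebra generated by the coordinates with index `≤ i`. -/
def pastSigma (𝒳 : Type*) [MeasurableSpace 𝒳] (i : ℤ) : MeasurableSpace (ℤ → 𝒳) :=
  MeasurableSpace.comap (fun ω (j : {j : ℤ // j ≤ i}) => ω (j : ℤ)) inferInstance

/-- The σ-algebra generated by the coordinates with index `≥ i`. -/
def futureSigma (𝒳 : Type*) [MeasurableSpace 𝒳] (i : ℤ) : MeasurableSpace (ℤ → 𝒳) :=
  MeasurableSpace.comap (fun ω (j : {j : ℤ // i ≤ j}) => ω (j : ℤ)) inferInstance

/-- Strong mixing coefficient `d(s)`. -/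
noncomputable def mixCoef (μ : Measure (ℤ → 𝒳)) (s : ℕ) : ℝ :=
  sSup {r : ℝ | ∃ (i : ℤ) (E F : Set (ℤ → 𝒳)),
    MeasurableSet[pastSigma 𝒳 i] E ∧ MeasurableSet[futureSigma 𝒳 (i + (s : ℤ))] F ∧
    μ E ≠ 0 ∧ r = |(μ (F ∩ E)).toReal / (μ E).toReal - (μ F).toReal|}

/-- The read length `ℓ(n) = ⌈β log n⌉`. -/
noncomputable def ell (β : ℝ) (n : ℕ) : ℕ := ⌈β * Real.log n⌉₊

/-- The window from which `I(2)` is drawn uniformly, given `I(1) = i₁`. -/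
noncomputable def window (n L : ℕ) (i₁ : ℤ) : Finset ℤ :=
  if i₁ ≤ (L : ℤ) - 1 then Finset.Icc (i₁ - (L : ℤ) + 1) (i₁ + (n : ℤ) - (L : ℤ))
  else if i₁ ≤ (n : ℤ) - (L : ℤ) + 1 then Finset.Icc 1 (n : ℤ)
  else Finset.Icc (i₁ + (L : ℤ) - (n : ℤ)) (i₁ + (L : ℤ) - 1)

/-- Joint pmf of the pair of starting indices `(I(1), I(2))`. -/
noncomputable def idxWeight (n L : ℕ) (i₁ i₂ : ℤ) : ℝ :=
  if i₁ ∈ Finset.Icc 1 (n : ℤ) ∧ i₂ ∈ window n L i₁ then (((n : ℝ)) ^ 2)⁻¹ else 0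

/-- The (signed) overlap between the two reads. -/
def overlap (L : ℕ) (i₁ i₂ : ℤ) : ℤ :=
  if i₁ ≤ i₂ then max 0 ((L : ℤ) - (i₂ - i₁)) else -(max 0 ((L : ℤ) - (i₁ - i₂)))

/-- Bayesian error probability of the detector `That` in the noiseless setting. -/
noncomputable def errProb (μ : Measure (ℤ → 𝒳)) (n L : ℕ)
    (That : (Fin L → 𝒳) → (Fin L → 𝒳) → ℤ) : ℝ :=
  ∑' p : ℤ × ℤ, idxWeight n L p.1 p.2 *
    (μ {ω | That (fun k => ω (p.1 + ((k : ℕ) : ℤ))) (fun k => ω (p.2 + ((k : ℕ) : ℤ))) ≠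
        overlap L p.1 p.2}).toReal

/-- Minimal Bayesian error probability over all detectors with values in `𝒯`. -/
noncomputable def Pstar (μ : Measure (ℤ → 𝒳)) (β : ℝ) (n : ℕ) : ℝ :=
  sInf {e : ℝ | ∃ That : (Fin (ell β n) → 𝒳) → (Fin (ell β n) → 𝒳) → ℤ,
    (∀ y₁ y₂, That y₁ y₂ ∈ Set.Icc (1 - (ell β n : ℤ)) ((ell β n : ℤ))) ∧
    e = errProb μ n (ell β n) That}

/-- The minimal detectable overlap `t_MDO(n)`. -/
noncomputable def tMDO (μ : Measure (ℤ → 𝒳)) (β : ℝ) (n : ℕ) : ℕ :=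
  sSup {t : ℕ | 1 ≤ t ∧ t ≤ ell β n ∧
    maxInfo μ t ≤ Real.log ((n : ℝ) - (2 * (ell β n : ℝ) - 1))}

/-! Since `maxInfo μ t ≈ ℋ₋∞ t`, the constraint `maxInfo μ t ≤ log n_ℓ` holds for `t` up to
about `log n_ℓ / ℋ₋∞` and fails beyond it. The cap `t ≤ ℓ ≈ β log n` does not bind because
`β > 1 / ℋ₋∞`, and `log n_ℓ ~ log n` because `ℓ = O(log n)`. -/

section GrowthRate

variable {f : ℕ → ℝ} {H : ℝ}

lemma eventually_apply_natCeil_mul_le (hf : Tendsto (fun t : ℕ => f t / t) atTop (nhds H))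
    {c : ℝ} (hc : 0 < c) (hcH : c * H < 1) : ∀ᶠ a : ℝ in atTop, f ⌈c * a⌉₊ ≤ a := by
  obtain ⟨H', hHH', hH'c⟩ :=
    exists_between (max_lt ((lt_div_iff₀' hc).2 hcH) (one_div_pos.2 hc) : max H 0 < 1 / c)
  have hH'0 : 0 < H' := (le_max_right H 0).trans_lt hHH'
  have hcH' : c * H' < 1 := (lt_div_iff₀' hc).1 hH'c
  have hub : ∀ᶠ t : ℕ in atTop, f t ≤ H' * t := by
    filter_upwards [hf.eventually (eventually_lt_nhds ((le_max_left H 0).trans_lt hHH')),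
      eventually_gt_atTop 0] with t ht ht0
    exact ((div_lt_iff₀ (by positivity)).1 ht).le
  have hceil : Tendsto (fun a : ℝ => ⌈c * a⌉₊) atTop atTop :=
    tendsto_nat_ceil_atTop.comp (tendsto_id.const_mul_atTop hc)
  filter_upwards [hceil.eventually hub, eventually_ge_atTop (H' / (1 - c * H')),
    eventually_ge_atTop 0] with a ha ha' ha0
  rw [div_le_iff₀ (by linarith)] at ha'
  calc f ⌈c * a⌉₊ ≤ H' * ⌈c * a⌉₊ := ha
    _ ≤ H' * (c * a + 1) := by gcongr; exact (Nat.ceil_lt_add_one (by positivity)).le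
    _ ≤ a := by linarith

lemma eventually_forall_le_mul_of_apply_le (hf : Tendsto (fun t : ℕ => f t / t) atTop (nhds H))
    (hH : 0 < H) {C : ℝ} (hC : 1 < C * H) :
    ∀ᶠ a : ℝ in atTop, ∀ t : ℕ, f t ≤ a → (t : ℝ) ≤ C * a := by
  have hC0 : 0 < C := pos_of_mul_pos_left (one_pos.trans hC) hH.le
  obtain ⟨H', hCH', hH'H⟩ := exists_between ((div_lt_iff₀' hC0).2 hC : 1 / C < H)
  have hH'0 : 0 < H' := (one_div_pos.2 hC0).trans hCH'
  have hlb : ∀ᶠ t : ℕ in atTop, H' * t ≤ f t := by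
    filter_upwards [hf.eventually (eventually_gt_nhds hH'H), eventually_gt_atTop 0] with t ht ht0
    exact ((lt_div_iff₀ (by positivity)).1 ht).le
  obtain ⟨T, hT⟩ := eventually_atTop.1 hlb
  filter_upwards [eventually_ge_atTop (T / C), eventually_ge_atTop 0] with a haT ha0 t ht
  rcases le_or_gt T t with hTt | htT
  · have h1 : 1 ≤ C * H' := ((div_lt_iff₀' hC0).1 hCH').le
    nlinarith [hT t hTt]
  · rw [div_le_iff₀ hC0] at haT
    have : (t : ℝ) < T := by exact_mod_cast htT
    linarith

end GrowthRate

lemma tendsto_div_of_eventually_mul_le {ι : Type*} {l : Filter ι} {T a : ι → ℝ} {L : ℝ}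
    (hL : 0 < L) (ha : ∀ᶠ i in l, 0 < a i)
    (hlow : ∀ c, 0 < c → c < L → ∀ᶠ i in l, c * a i ≤ T i)
    (hup : ∀ C, L < C → ∀ᶠ i in l, T i ≤ C * a i) :
    Tendsto (fun i => T i / a i) l (nhds L) := by
  rw [tendsto_order]
  constructor
  · intro c' hc'
    obtain ⟨c, hc'c, hcL⟩ := exists_between (max_lt hc' hL)
    filter_upwards [ha, hlow c ((le_max_right c' 0).trans_lt hc'c) hcL] with i hai hi
    exact ((le_max_left c' 0).trans_lt hc'c).trans_le ((le_div_iff₀ hai).2 hi)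
  · intro C' hC'
    obtain ⟨C, hLC, hCC'⟩ := exists_between hC'
    filter_upwards [ha, hup C hLC] with i hai hi
    exact ((div_le_iff₀ hai).2 hi).trans_lt hCC'

lemma tendsto_log_natCast_atTop : Tendsto (fun n : ℕ => Real.log n) atTop atTop :=
  Real.tendsto_log_atTop.comp tendsto_natCast_atTop_atTop

lemma one_le_ell {β : ℝ} (hβ : 0 < β) {n : ℕ} (hn : 2 ≤ n) : 1 ≤ ell β n :=
  Nat.one_le_ceil_iff.2 (mul_pos hβ (Real.log_pos (by exact_mod_cast hn)))

lemma ell_le {β : ℝ} (hβ : 0 ≤ β) (n : ℕ) : (ell β n : ℝ) ≤ β * Real.log n + 1 :=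
  (Nat.ceil_lt_add_one (mul_nonneg hβ (Real.log_natCast_nonneg n))).le

lemma eventually_four_mul_ell_le {β : ℝ} (hβ : 0 ≤ β) :
    ∀ᶠ n : ℕ in atTop, 4 * (ell β n : ℝ) ≤ n := by
  have hlo : (fun x : ℝ => 4 * β * Real.log x + 4) =o[atTop] id :=
    (Real.isLittleO_log_id_atTop.const_mul_left (4 * β)).add
      (Asymptotics.isLittleO_const_id_atTop 4)
  filter_upwards [tendsto_natCast_atTop_atTop.eventually (hlo.def one_pos)] with n hn
  have := le_norm_self (4 * β * Real.log n + 4)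
  rw [one_mul, id, Real.norm_natCast] at hn
  linarith [ell_le hβ n]

noncomputable def nEll (β : ℝ) (n : ℕ) : ℝ := (n : ℝ) - (2 * (ell β n : ℝ) - 1)

lemma eventually_log_nEll_mem_Icc {β : ℝ} (hβ : 0 < β) :
    ∀ᶠ n : ℕ in atTop,
      Real.log (nEll β n) ∈ Set.Icc (Real.log n - Real.log 2) (Real.log n) := by
  filter_upwards [eventually_four_mul_ell_le hβ.le, eventually_ge_atTop 2] with n h4 hn
  have hℓ : (1 : ℝ) ≤ ell β n := by exact_mod_cast one_le_ell hβ hn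
  have hn2 : (2 : ℝ) ≤ n := by exact_mod_cast hn
  have hhalf : (n : ℝ) / 2 ≤ nEll β n := by unfold nEll; linarith
  refine ⟨?_, ?_⟩
  · rw [← Real.log_div (by positivity) two_ne_zero]
    exact Real.log_le_log (by positivity) hhalf
  · exact Real.log_le_log (by linarith) (by unfold nEll; linarith)

lemma tendsto_log_nEll_atTop {β : ℝ} (hβ : 0 < β) :
    Tendsto (fun n => Real.log (nEll β n)) atTop atTop :=
  tendsto_atTop_mono' _ ((eventually_log_nEll_mem_Icc hβ).mono fun _ h => h.1)
    (tendsto_atTop_add_const_right _ _ tendsto_log_natCast_atTop)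

lemma tendsto_log_nEll_div_log {β : ℝ} (hβ : 0 < β) :
    Tendsto (fun n => Real.log (nEll β n) / Real.log n) atTop (nhds 1) := by
  have hlow : Tendsto (fun n : ℕ => 1 - Real.log 2 / Real.log n) atTop (nhds 1) := by
    simpa using tendsto_const_nhds.sub (tendsto_const_nhds.div_atTop tendsto_log_natCast_atTop)
  refine tendsto_of_tendsto_of_tendsto_of_le_of_le' hlow tendsto_const_nhds ?_ ?_ <;>
    filter_upwards [eventually_log_nEll_mem_Icc hβ,
      tendsto_log_natCast_atTop.eventually_gt_atTop 0] with n hb hpos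
  · rw [one_sub_div hpos.ne']
    exact div_le_div_of_nonneg_right hb.1 hpos.le
  · exact (div_le_one hpos).2 hb.2

section DetectableOverlaps

variable {f : ℕ → ℝ} {H β : ℝ} {n : ℕ}

def detectableOverlaps (f : ℕ → ℝ) (β : ℝ) (n : ℕ) : Set ℕ :=
  {t | 1 ≤ t ∧ t ≤ ell β n ∧ f t ≤ Real.log (nEll β n)}

lemma bddAbove_detectableOverlaps : BddAbove (detectableOverlaps f β n) :=
  ⟨ell β n, fun _ ht => ht.2.1⟩

lemma eventually_detectableOverlaps_nonempty_and_le_sSup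
    (hf : Tendsto (fun t : ℕ => f t / t) atTop (nhds H)) (hβ : 0 < β) {c : ℝ} (hc : 0 < c)
    (hcH : c * H < 1) (hcβ : c ≤ β) :
    ∀ᶠ n in atTop, (detectableOverlaps f β n).Nonempty ∧
      c * Real.log (nEll β n) ≤ (sSup (detectableOverlaps f β n) : ℕ) := by
  have ha := tendsto_log_nEll_atTop hβ
  filter_upwards [ha.eventually (eventually_apply_natCeil_mul_le hf hc hcH),
    ha.eventually_gt_atTop 0, eventually_log_nEll_mem_Icc hβ] with n hfn ha0 hb
  have hmem : ⌈c * Real.log (nEll β n)⌉₊ ∈ detectableOverlaps f β n :=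
    ⟨Nat.one_le_ceil_iff.2 (mul_pos hc ha0),
      Nat.ceil_le_ceil (mul_le_mul hcβ hb.2 ha0.le hβ.le), hfn⟩
  exact ⟨⟨_, hmem⟩, (Nat.le_ceil _).trans
    (by exact_mod_cast le_csSup bddAbove_detectableOverlaps hmem)⟩

lemma eventually_sSup_detectableOverlaps_le
    (hf : Tendsto (fun t : ℕ => f t / t) atTop (nhds H)) (hβ : 0 < β) (hH : 0 < H) {C : ℝ}
    (hC : 1 < C * H) :
    ∀ᶠ n in atTop, (detectableOverlaps f β n).Nonempty →
      ((sSup (detectableOverlaps f β n) : ℕ) : ℝ) ≤ C * Real.log (nEll β n) :=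
  ((tendsto_log_nEll_atTop hβ).eventually (eventually_forall_le_mul_of_apply_le hf hH hC)).mono
    fun _ hn hne => hn _ (Nat.sSup_mem hne bddAbove_detectableOverlaps).2.2

end DetectableOverlaps

theorem tMDO_asymptotics_general
    (μ : Measure (ℤ → 𝒳))
    (β : ℝ) (hβ : 0 < β)
    (Hinf : ℝ) (hHinfpos : 0 < Hinf)
    (hHinf : Tendsto (fun t : ℕ => maxInfo μ t / t) atTop (nhds Hinf))
    (hβH : 1 < β * Hinf) :
    (∀ᶠ n : ℕ in atTop,
        {t : ℕ | 1 ≤ t ∧ t ≤ ell β n ∧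
          maxInfo μ t ≤ Real.log ((n : ℝ) - (2 * (ell β n : ℝ) - 1))}.Nonempty) ∧
      Tendsto (fun n : ℕ => (tMDO μ β n : ℝ)) atTop atTop ∧
      Tendsto (fun n : ℕ => (tMDO μ β n : ℝ) / Real.log n) atTop (nhds (1 / Hinf)) := by
  have hL : 0 < 1 / Hinf := by positivity
  have hlow : ∀ c, 0 < c → c < 1 / Hinf → ∀ᶠ n in atTop,
      (detectableOverlaps (maxInfo μ) β n).Nonempty ∧
        c * Real.log (nEll β n) ≤ tMDO μ β n :=
    fun c hc hcL => eventually_detectableOverlaps_nonempty_and_le_sSup hHinf hβ hc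
      ((lt_div_iff₀ hHinfpos).1 hcL) (hcL.trans ((div_lt_iff₀ hHinfpos).2 hβH)).le
  have hhalf := hlow _ (half_pos hL) (half_lt_self hL)
  have hne := hhalf.mono fun _ h => h.1
  have hlog := tendsto_log_nEll_atTop hβ
  have hratio :
      Tendsto (fun n => (tMDO μ β n : ℝ) / Real.log (nEll β n)) atTop (nhds (1 / Hinf)) :=
    tendsto_div_of_eventually_mul_le hL (hlog.eventually_gt_atTop 0)
      (fun c hc hcL => (hlow c hc hcL).mono fun _ h => h.2)
      (fun C hC => ((eventually_sSup_detectableOverlaps_le hHinf hβ hHinfpos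
        ((div_lt_iff₀ hHinfpos).1 hC)).and hne).mono fun _ h => h.1 h.2)
  refine ⟨hne, ?_, ?_⟩
  · exact tendsto_atTop_mono' _ (hhalf.mono fun _ h => h.2) (hlog.const_mul_atTop (half_pos hL))
  · have h := hratio.mul (tendsto_log_nEll_div_log hβ)
    rw [mul_one] at h
    refine h.congr' ?_
    filter_upwards [hlog.eventually_gt_atTop 0] with n hn
    exact div_mul_div_cancel₀ hn.ne'

/-- Asymptotics of the minimal detectable overlap. -/
theorem tMDO_asymptotics
    (μ : Measure (ℤ → 𝒳)) [IsProbabilityMeasure μ]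
    (herg : Ergodic (shift (𝒳 := 𝒳)) μ)
    (β : ℝ) (hβ : 0 < β)
    (Hinf : ℝ) (hHinfpos : 0 < Hinf)
    (hHinf : Tendsto (fun t : ℕ => maxInfo μ t / t) atTop (nhds Hinf))
    (hβH : 1 < β * Hinf) :
    (∀ᶠ n : ℕ in atTop,
        {t : ℕ | 1 ≤ t ∧ t ≤ ell β n ∧
          maxInfo μ t ≤ Real.log ((n : ℝ) - (2 * (ell β n : ℝ) - 1))}.Nonempty) ∧
      Tendsto (fun n : ℕ => (tMDO μ β n : ℝ)) atTop atTop ∧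
      Tendsto (fun n : ℕ => (tMDO μ β n : ℝ) / Real.log n) atTop (nhds (1 / Hinf)) :=
  tMDO_asymptotics_general μ β hβ Hinf hHinfpos hHinf hβH

end
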